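/- Let X, Y be two compact topological spaces endowed with continuous functions φ: X → ℝⁿ, ψ: Y → ℝⁿ, let (u,v), (u',v') ∈ Δ⁺, and let k be an integer. If no surjective homomorphism exists from any subgroup of H_k^{(X,φ)}(u,v) onto H_k^{(Y,ψ)}(u',v'), then δ((X,φ),(Y,ψ)) ≥ min_i min{uᵢ − u'ᵢ, v'ᵢ − vᵢ}. -/

import Mathlib

open CategoryTheory

/-- The "chains with coefficients in `G`" functor `S ↦ S →₀ G`. -/
@[simps]
noncomputable def coeffFunctor (G : Type) [AddCommGroup G] : Type ⥤ AddCommGrpCat where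
  obj S := AddCommGrpCat.of (S →₀ G)
  map f := AddCommGrpCat.ofHom (Finsupp.mapDomain.addMonoidHom f)
  map_id S := AddCommGrpCat.hom_ext Finsupp.mapDomain.addMonoidHom_id
  map_comp f g := AddCommGrpCat.hom_ext (Finsupp.mapDomain.addMonoidHom_comp g f)

/-- The singular chain complex with coefficients in the abelian group `G`. -/
noncomputable def singularChainComplexFunctor (G : Type) [AddCommGroup G] :
    TopCat.{0} ⥤ ChainComplex AddCommGrpCat ℕ :=
  TopCat.toSSet ⋙ ((SimplicialObject.whiskering (Type 0) AddCommGrpCat).obj (coeffFunctor G)) ⋙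
    AlgebraicTopology.alternatingFaceMapComplex AddCommGrpCat

/-- Singular homology with coefficients in `G`, in degree `k : ℤ` (trivial in negative degrees). -/
noncomputable def singularHomologyFunctor (G : Type) [AddCommGroup G] (k : ℤ) :
    TopCat.{0} ⥤ AddCommGrpCat :=
  if 0 ≤ k then
    singularChainComplexFunctor G ⋙ HomologicalComplex.homologyFunctor AddCommGrpCat _ k.toNat
  else (Functor.const _).obj (AddCommGrpCat.of PUnit)

/-- The sublevel set `X⟨φ ≼ u⟩`. -/
def sublevelSet {n : ℕ} {X : Type} (φ : X → Fin n → ℝ) (u : Fin n → ℝ) : Set X :=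
  {x | ∀ i, φ x i ≤ u i}

/-- The sublevel set as a topological space. -/
def sublevelTop {n : ℕ} {X : Type} [TopologicalSpace X] (φ : X → Fin n → ℝ)
    (u : Fin n → ℝ) : TopCat.{0} :=
  TopCat.of (sublevelSet φ u)

/-- The inclusion of sublevel sets. -/
def sublevelIncl {n : ℕ} {X : Type} [TopologicalSpace X] (φ : X → Fin n → ℝ)
    {u v : Fin n → ℝ} (h : ∀ i, u i ≤ v i) : sublevelTop φ u ⟶ sublevelTop φ v :=
  TopCat.ofHom (ContinuousMap.mk (Set.inclusion (fun _x hx i => le_trans (hx i) (h i)))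
    (continuous_inclusion _))

/-- The multidimensional `k`-th persistent homology group of `(X, φ)` at `(u, v)`,
with coefficients in the abelian group `G`: the image of the homomorphism induced
in homology by the inclusion of sublevel sets. -/
noncomputable def persistentHomologyGroup (G : Type) [AddCommGroup G] (k : ℤ)
    {n : ℕ} {X : Type} [TopologicalSpace X] (φ : X → Fin n → ℝ)
    {u v : Fin n → ℝ} (h : ∀ i, u i ≤ v i) : Type :=
  AddMonoidHom.range ((singularHomologyFunctor G k).map (sublevelIncl φ h)).hom

noncomputable instance (G : Type) [AddCommGroup G] (k : ℤ)
    {n : ℕ} {X : Type} [TopologicalSpace X] (φ : X → Fin n → ℝ)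
    {u v : Fin n → ℝ} (h : ∀ i, u i ≤ v i) :
    AddCommGroup (persistentHomologyGroup G k φ h) := by
  unfold persistentHomologyGroup; infer_instance

/-- There is a surjective homomorphism from a subgroup of `A` onto `B`. -/
def ExistsSurjHomFromSubgroup (A B : Type) [AddCommGroup A] [AddCommGroup B] : Prop :=
  ∃ (S : AddSubgroup A) (f : S →+ B), Function.Surjective f

/-- The set `E` of all `ε ≥ 0` such that, for every `(u,v) ∈ Δ⁺`, surjective homomorphisms
exist from a subgroup of `H_k^{(X,φ)}(u,v)` onto `H_k^{(Y,ψ)}(u-ε⃗,v+ε⃗)` and from a subgroup of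
`H_k^{(Y,ψ)}(u,v)` onto `H_k^{(X,φ)}(u-ε⃗,v+ε⃗)`. -/
def dTSet (G : Type) [AddCommGroup G] (k : ℤ) {n : ℕ} {X Y : Type}
    [TopologicalSpace X] [TopologicalSpace Y]
    (φ : X → Fin n → ℝ) (ψ : Y → Fin n → ℝ) : Set ℝ :=
  {ε | ∃ hε : 0 ≤ ε, ∀ u v : Fin n → ℝ, ∀ h : ∀ i, u i < v i,
    ExistsSurjHomFromSubgroup
      (persistentHomologyGroup G k φ (fun i => (h i).le))
      (persistentHomologyGroup G k ψ
        (u := fun i => u i - ε) (v := fun i => v i + ε)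
        (fun i => by have := (h i).le; (try dsimp only); linarith)) ∧
    ExistsSurjHomFromSubgroup
      (persistentHomologyGroup G k ψ (fun i => (h i).le))
      (persistentHomologyGroup G k φ
        (u := fun i => u i - ε) (v := fun i => v i + ε)
        (fun i => by have := (h i).le; (try dsimp only); linarith))}

/-- The pseudo-distance `d_T` between the `k`-th persistent homology groups of `(X,φ)`
and `(Y,ψ)`: the infimum of the set `E` (`∞` if `E` is empty). -/
noncomputable def dT (G : Type) [AddCommGroup G] (k : ℤ) {n : ℕ} {X Y : Type}
    [TopologicalSpace X] [TopologicalSpace Y]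
    (φ : X → Fin n → ℝ) (ψ : Y → Fin n → ℝ) : ENNReal :=
  sInf (ENNReal.ofReal '' dTSet G k φ ψ)

/-- The sup-norm (max-norm) distance between two `ℝⁿ`-valued functions. -/
noncomputable def supNormDist {n : ℕ} {X : Type} (φ ψ : X → Fin n → ℝ) : ENNReal :=
  ⨆ (x : X) (i : Fin n), ENNReal.ofReal |φ x i - ψ x i|

/-- The natural pseudo-distance between `(X,φ)` and `(Y,ψ)`:
`inf_h ‖φ - ψ ∘ h‖_∞` over all homeomorphisms `h : X → Y` (`∞` if none exists). -/
noncomputable def naturalPseudoDistance {n : ℕ} {X Y : Type}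
    [TopologicalSpace X] [TopologicalSpace Y]
    (φ : X → Fin n → ℝ) (ψ : Y → Fin n → ℝ) : ENNReal :=
  ⨅ (h : X ≃ₜ Y), supNormDist φ (fun x => ψ (h x))

/-! A homeomorphism `h` with `‖φ - ψ ∘ h‖_∞ < min_i min{uᵢ - u'ᵢ, v'ᵢ - vᵢ}` maps `Y⟨ψ ≼ u'⟩` into
`X⟨φ ≼ u⟩` (via `h⁻¹`) and `X⟨φ ≼ v⟩` into `Y⟨ψ ≼ v'⟩`, so the inclusion `Y⟨ψ ≼ u'⟩ ⊆ Y⟨ψ ≼ v'⟩`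
factors through the inclusion `X⟨φ ≼ u⟩ ⊆ X⟨φ ≼ v⟩`. By functoriality of homology,
`H_k^{(Y,ψ)}(u',v')` is then the image under a homomorphism of a subgroup of `H_k^{(X,φ)}(u,v)`. -/

open Set

theorem existsSurjHomFromSubgroup_map_of_le {C D : Type} [AddCommGroup C] [AddCommGroup D]
    (f : C →+ D) {K L : AddSubgroup C} (hKL : K ≤ L) :
    ExistsSurjHomFromSubgroup L (K.map f) :=
  ⟨K.addSubgroupOf L,
    { toFun := fun s => ⟨f s.1.1, s.1.1, s.2, rfl⟩
      map_zero' := Subtype.ext f.map_zero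
      map_add' := fun s t => Subtype.ext (f.map_add s.1.1 t.1.1) },
    by
      rintro ⟨_, c, hc, rfl⟩
      exact ⟨⟨⟨c, hKL hc⟩, hc⟩, rfl⟩⟩

theorem existsSurjHomFromSubgroup_range_comp {A B C D : Type} [AddCommGroup A] [AddCommGroup B]
    [AddCommGroup C] [AddCommGroup D] (a : A →+ B) (i : B →+ C) (b : C →+ D) :
    ExistsSurjHomFromSubgroup i.range (b.comp (i.comp a)).range := by
  rw [AddMonoidHom.range_comp, AddMonoidHom.range_comp]
  exact existsSurjHomFromSubgroup_map_of_le b (AddSubgroup.map_le_range i a.range)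

section Sublevel

variable {n : ℕ} {X Y : Type} {φ : X → Fin n → ℝ} {ψ : Y → Fin n → ℝ}

theorem abs_sub_lt_of_supNormDist_lt {φ' : X → Fin n → ℝ} {c : ℝ}
    (h : supNormDist φ φ' < ENNReal.ofReal c) (x : X) (i : Fin n) : |φ x i - φ' x i| < c :=
  (ENNReal.ofReal_lt_ofReal_iff_of_nonneg (abs_nonneg _)).mp
    ((le_iSup₂ (f := fun x i => ENNReal.ofReal |φ x i - φ' x i|) x i).trans_lt h)

theorem mapsTo_sublevelSet {f : X → Y} {u u' : Fin n → ℝ}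
    (hf : ∀ x i, ψ (f x) i - φ x i ≤ u' i - u i) :
    MapsTo f (sublevelSet φ u) (sublevelSet ψ u') := fun x hx i => by
  linarith [hf x i, hx i]

variable [TopologicalSpace X] [TopologicalSpace Y]

def sublevelMap (f : C(X, Y)) {u u' : Fin n → ℝ}
    (hf : MapsTo f (sublevelSet φ u) (sublevelSet ψ u')) : sublevelTop φ u ⟶ sublevelTop ψ u' :=
  TopCat.ofHom ⟨hf.restrict f _ _, f.continuous.restrict hf⟩

theorem sublevelMap_comp_sublevelIncl_comp_sublevelMap {u v u' v' : Fin n → ℝ}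
    (huv : ∀ i, u i ≤ v i) (huv' : ∀ i, u' i ≤ v' i) {f : C(Y, X)} {g : C(X, Y)}
    (hgf : Function.LeftInverse g f) (hf : MapsTo f (sublevelSet ψ u') (sublevelSet φ u))
    (hg : MapsTo g (sublevelSet φ v) (sublevelSet ψ v')) :
    sublevelMap f hf ≫ sublevelIncl φ huv ≫ sublevelMap g hg = sublevelIncl ψ huv' := by
  ext y
  exact Subtype.ext (hgf y.1)

theorem existsSurjHomFromSubgroup_of_factorization (G : Type) [AddCommGroup G] (k : ℤ)
    {u v u' v' : Fin n → ℝ} (huv : ∀ i, u i ≤ v i) (huv' : ∀ i, u' i ≤ v' i)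
    (f : sublevelTop ψ u' ⟶ sublevelTop φ u) (g : sublevelTop φ v ⟶ sublevelTop ψ v')
    (hfg : f ≫ sublevelIncl φ huv ≫ g = sublevelIncl ψ huv') :
    ExistsSurjHomFromSubgroup (persistentHomologyGroup G k φ huv)
      (persistentHomologyGroup G k ψ huv') := by
  have key := existsSurjHomFromSubgroup_range_comp ((singularHomologyFunctor G k).map f).hom
    ((singularHomologyFunctor G k).map (sublevelIncl φ huv)).hom
    ((singularHomologyFunctor G k).map g).hom
  rwa [← AddCommGrpCat.hom_comp, ← AddCommGrpCat.hom_comp, ← Functor.map_comp,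
    ← Functor.map_comp, Category.assoc, hfg] at key

end Sublevel

theorem naturalPseudoDistance_lower_bound_general (G : Type) [AddCommGroup G] (k : ℤ) (n : ℕ)
    {X Y : Type} [TopologicalSpace X] [TopologicalSpace Y]
    (φ : X → Fin n → ℝ) (ψ : Y → Fin n → ℝ)
    (u v u' v' : Fin n → ℝ) (huv : ∀ i, u i < v i) (huv' : ∀ i, u' i < v' i)
    (hno : ¬ ExistsSurjHomFromSubgroup
      (persistentHomologyGroup G k φ (fun i => (huv i).le))
      (persistentHomologyGroup G k ψ (fun i => (huv' i).le))) :
    ENNReal.ofReal (⨅ i : Fin n, min (u i - u' i) (v' i - v i)) ≤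
      naturalPseudoDistance φ ψ := by
  refine le_iInf fun h => not_lt.mp fun hlt => hno ?_
  have hclose := abs_sub_lt_of_supNormDist_lt hlt
  have hmin i : ⨅ j, min (u j - u' j) (v' j - v j) ≤ min (u i - u' i) (v' i - v i) :=
    ciInf_le (Finite.bddBelow_range _) i
  have hsymm : MapsTo h.symm (sublevelSet ψ u') (sublevelSet φ u) :=
    mapsTo_sublevelSet fun y i => by
      have := hclose (h.symm y) i
      rw [h.apply_symm_apply] at this
      linarith [abs_lt.mp this, min_le_left (u i - u' i) (v' i - v i), hmin i]
  have hforth : MapsTo h (sublevelSet φ v) (sublevelSet ψ v') :=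
    mapsTo_sublevelSet fun x i => by
      linarith [abs_lt.mp (hclose x i), min_le_right (u i - u' i) (v' i - v i), hmin i]
  exact existsSurjHomFromSubgroup_of_factorization G k _ _ _ _
    (sublevelMap_comp_sublevelIncl_comp_sublevelMap (f := (h.symm : C(Y, X)))
      (g := (h : C(X, Y))) _ _ h.apply_symm_apply hsymm hforth)

/-- **Corollary.** Let `X`, `Y` be two compact topological spaces endowed with continuous
functions `φ : X → ℝⁿ`, `ψ : Y → ℝⁿ`, let `(u,v), (u',v') ∈ Δ⁺`, and let `k` be an integer.
If no surjective homomorphism exists from any subgroup of `H_k^{(X,φ)}(u,v)` onto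
`H_k^{(Y,ψ)}(u',v')`, then `δ((X,φ),(Y,ψ)) ≥ min_i min{uᵢ − u'ᵢ, v'ᵢ − vᵢ}`. -/
theorem naturalPseudoDistance_lower_bound (G : Type) [AddCommGroup G] (k : ℤ) (n : ℕ)
    {X Y : Type} [TopologicalSpace X] [TopologicalSpace Y]
    [CompactSpace X] [CompactSpace Y]
    (φ : X → Fin n → ℝ) (ψ : Y → Fin n → ℝ) (hφ : Continuous φ) (hψ : Continuous ψ)
    (u v u' v' : Fin n → ℝ) (huv : ∀ i, u i < v i) (huv' : ∀ i, u' i < v' i)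
    (hno : ¬ ExistsSurjHomFromSubgroup
      (persistentHomologyGroup G k φ (fun i => (huv i).le))
      (persistentHomologyGroup G k ψ (fun i => (huv' i).le))) :
    ENNReal.ofReal (⨅ i : Fin n, min (u i - u' i) (v' i - v i)) ≤
      naturalPseudoDistance φ ψ :=
  naturalPseudoDistance_lower_bound_general G k n φ ψ u v u' v' huv huv' hno
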